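/- Let r, s ≥ 0 and let m₁, …, m_s be integers with m_i ≥ 2 for all i. Let G = 𝔽_r * ℤ_{m₁} * ⋯ * ℤ_{m_s}. Then G is Hopfian: every surjective group homomorphism φ : G → G is an isomorphism. -/

import Mathlib

/-!
A finitely generated residually finite group `G` is Hopfian (Mal'cev): if `φ` is onto, then
`ψ ↦ ψ ∘ φ` is injective on the finite set `Hom(G, F)` for every finite `F`, hence bijective,
so every map to a finite group factors through `φ` and kills `ker φ`.

Residual finiteness of a free product of residually finite groups: reducing the letters of a
reduced word modulo suitable finite-index normal subgroups keeps it reduced, and in a free product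
of finite groups a nontrivial reduced word `w` already acts nontrivially on the finite set of
reduced words of length at most `|w|`, since it sends the empty word to `w`.
-/

open Function

namespace Group

variable {G : Type*} [Group G]

theorem residuallyFinite_of_forall_exists_monoidHom.{u}
    (h : ∀ g : G, g ≠ 1 →
      ∃ (H : Type u) (_ : Group H) (_ : ResiduallyFinite H) (f : G →* H), f g ≠ 1) :
    ResiduallyFinite G := by
  rw [residuallyFinite_iff_exists_finiteIndexNormalSubgroup]
  intro g hg
  obtain ⟨H, _, _, f, hf⟩ := h g hg
  obtain ⟨K, hK⟩ := exists_finiteIndexNormalSubgroup_notMem (f g) hf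
  exact ⟨K.comap f, hK⟩

theorem ResiduallyFinite.of_injective {H : Type*} [Group H] [ResiduallyFinite H] (f : G →* H)
    (hf : Injective f) : ResiduallyFinite G :=
  residuallyFinite_of_forall_exists_monoidHom fun _ hg =>
    ⟨H, _, ‹_›, f, by rwa [Ne, map_eq_one_iff f hf]⟩

theorem exists_finiteIndexNormalSubgroup_forall_notMem [ResiduallyFinite G] {S : Set G}
    (hS : S.Finite) (h1 : (1 : G) ∉ S) :
    ∃ H : FiniteIndexNormalSubgroup G, ∀ g ∈ S, g ∉ H := by
  induction S, hS using Set.Finite.induction_on with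
  | empty => exact ⟨.ofSubgroup ⊤, by simp⟩
  | @insert a S _ _ ih =>
    obtain ⟨H, hH⟩ := ih fun h => h1 (Set.mem_insert_of_mem a h)
    obtain ⟨K, hK⟩ :=
      exists_finiteIndexNormalSubgroup_notMem a fun ha => h1 (ha ▸ Set.mem_insert a S)
    refine ⟨H ⊓ K, ?_⟩
    rintro g (rfl | hg) hmem
    · exact hK hmem.2
    · exact hH g hg hmem.1

instance {F : Type*} [Group F] [Finite F] [FG G] : Finite (G →* F) := by
  obtain ⟨α, _, π, hπ⟩ := fg_iff_exists_freeGroup_hom_surjective_finite.mp ‹FG G›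
  have : Finite (FreeGroup α →* F) := .of_equiv _ FreeGroup.lift
  exact .of_injective (fun ψ : G →* F => ψ.comp π) fun ψ₁ ψ₂ h =>
    MonoidHom.ext <| hπ.forall.mpr (DFunLike.congr_fun h)

instance : ResiduallyFinite (Multiplicative ℤ) := by
  refine residuallyFinite_of_forall_exists_finite_monoidHom fun n hn => ?_
  refine ⟨Multiplicative (ZMod (n.toAdd.natAbs + 1)), _, inferInstance,
    AddMonoidHom.toMultiplicative (Int.castAddHom _), fun h => hn ?_⟩
  have hdvd : ((n.toAdd.natAbs + 1 : ℕ) : ℤ) ∣ n.toAdd :=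
    (ZMod.intCast_zmod_eq_zero_iff_dvd _ _).mp (congrArg Multiplicative.toAdd h)
  have := Int.eq_zero_of_abs_lt_dvd hdvd (by rw [Int.abs_eq_natAbs]; omega)
  exact congrArg Multiplicative.ofAdd this

end Group

namespace MonoidHom

theorem injective_of_surjective_of_residuallyFinite {G : Type*} [Group G] [Group.FG G]
    [Group.ResiduallyFinite G] {φ : G →* G} (hφ : Surjective φ) : Injective φ := by
  refine (injective_iff_map_eq_one φ).mpr fun a ha => ?_
  by_contra hne
  obtain ⟨H, haH⟩ := Group.exists_finiteIndexNormalSubgroup_notMem a hne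
  let χ := QuotientGroup.mk' H.toSubgroup
  have hcomp : Injective fun ψ : G →* G ⧸ H.toSubgroup => ψ.comp φ := fun ψ₁ ψ₂ h =>
    MonoidHom.ext <| hφ.forall.mpr (DFunLike.congr_fun h)
  obtain ⟨ψ, hψ⟩ := Finite.injective_iff_surjective.mp hcomp χ
  have : χ a = 1 := by rw [← hψ, comp_apply, ha, map_one]
  exact haH ((QuotientGroup.eq_one_iff a).mp this)

end MonoidHom

namespace Monoid.CoprodI

open Word

section Monoid

variable {ι : Type*} {M : ι → Type*} [∀ i, Monoid (M i)]

theorem Word.prod_eq_one_iff [DecidableEq ι] [∀ i, DecidableEq (M i)] {w : Word M} :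
    w.prod = 1 ↔ w = empty :=
  (Word.equiv (M := M)).symm.injective.eq_iff' prod_empty

theorem lift_of_comp_prod_ne_one {N : ι → Type*} [∀ i, Monoid (N i)] (f : ∀ i, M i →* N i)
    {w : Word M} (hw : w ≠ empty) (hf : ∀ l ∈ w.toList, f l.1 l.2 ≠ 1) :
    lift (fun i => of.comp (f i)) w.prod ≠ 1 := by
  classical
  let w' : Word N :=
    { toList := w.toList.map fun l => ⟨l.1, f l.1 l.2⟩
      ne_one := by
        simp only [List.mem_map]
        rintro _ ⟨l, hl, rfl⟩
        exact hf l hl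
      chain_ne := List.isChain_map _ |>.mpr w.chain_ne }
  have hprod : lift (fun i => of.comp (f i)) w.prod = w'.prod := by
    simp only [Word.prod, map_list_prod, List.map_map, w']
    rfl
  have hw' : w' ≠ empty := fun h => hw <| Word.ext <| by
    simpa [w', Word.empty] using congrArg Word.toList h
  rwa [hprod, Ne, Word.prod_eq_one_iff]

variable [DecidableEq ι] [∀ i, DecidableEq (M i)]

theorem Word.length_smul_le {i : ι} (m : M i) (w : Word M) :
    (m • w).toList.length ≤ (equivPair i w).tail.toList.length + 1 := by
  rw [smul_def, rcons]
  split <;> simp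

theorem Word.equivPair_tail_smul {i : ι} (m : M i) (w : Word M) :
    (equivPair i (m • w)).tail = (equivPair i w).tail := by
  rw [smul_eq_of_smul, equivPair_smul_same]

variable (M) in
abbrev BoundedWord (n : ℕ) : Type _ := {w : Word M // w.toList.length ≤ n}

namespace BoundedWord

variable {n : ℕ}

instance [Finite ι] [∀ i, Finite (M i)] : Finite (BoundedWord M n) :=
  have : Finite {l : List (Σ i, M i) // l.length ≤ n} := (List.finite_length_le _ n).to_subtype
  .of_injective
    (fun w : BoundedWord M n => (⟨w.1.toList, w.2⟩ : {l : List _ // l.length ≤ n}))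
    fun _ _ h => Subtype.ext <| Word.ext <| congrArg Subtype.val h

def empty : BoundedWord M n := ⟨Word.empty, by simp [Word.empty]⟩

/-- `M i` acts on words of length `≤ n` as on all words, except that it fixes the words whose
`M i`-free tail `t` has length `n`: that orbit has no other word of length `≤ n` than `t`. -/
def smul {i : ι} (m : M i) (w : BoundedWord M n) : BoundedWord M n :=
  if h : (equivPair i w.1).tail.toList.length < n then
    ⟨m • w.1, (Word.length_smul_le m w.1).trans h⟩
  else w

theorem smul_of_lt {i : ι} (m : M i) {w : BoundedWord M n}
    (h : (equivPair i w.1).tail.toList.length < n) :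
    smul m w = ⟨m • w.1, (Word.length_smul_le m w.1).trans h⟩ :=
  dif_pos h

theorem smul_of_not_lt {i : ι} (m : M i) {w : BoundedWord M n}
    (h : ¬(equivPair i w.1).tail.toList.length < n) : smul m w = w :=
  dif_neg h

instance (i : ι) : MulAction (M i) (BoundedWord M n) where
  smul := smul
  one_smul w := by
    change smul 1 w = w
    by_cases h : (equivPair i w.1).tail.toList.length < n
    · simp [smul_of_lt _ h]
    · exact smul_of_not_lt _ h
  mul_smul m m' w := by
    change smul (m * m') w = smul m (smul m' w)
    by_cases h : (equivPair i w.1).tail.toList.length < n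
    · have h' : (equivPair i (m' • w.1)).tail.toList.length < n := by
        rwa [Word.equivPair_tail_smul]
      rw [smul_of_lt _ h, smul_of_lt _ h, smul_of_lt _ h', Subtype.mk.injEq, mul_smul]
    · rw [smul_of_not_lt _ h, smul_of_not_lt _ h, smul_of_not_lt _ h]

theorem smul_val_of_fstIdx_ne {i : ι} (m : M i) {w : Word M} (hw : w.fstIdx ≠ some i)
    (hlen : w.toList.length < n) : (m • (⟨w, hlen.le⟩ : BoundedWord M n)).1 = m • w :=
  congrArg Subtype.val <| smul_of_lt m <| by rwa [equivPair_eq_of_fstIdx_ne hw]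

end BoundedWord

end Monoid

section Group

variable {ι : Type*} {G : ι → Type*} [∀ i, Group (G i)]

section BoundedWord

variable [DecidableEq ι] [∀ i, DecidableEq (G i)]

def boundedWordRep (n : ℕ) : CoprodI G →* Equiv.Perm (BoundedWord G n) :=
  lift fun i => MulAction.toPermHom (G i) _

theorem boundedWordRep_prod_apply_empty {n : ℕ} (w : Word G) (hw : w.toList.length ≤ n) :
    boundedWordRep n w.prod BoundedWord.empty = ⟨w, hw⟩ := by
  induction w using consRecOn with
  | empty => rfl
  | cons i g w' hfst hg ih =>
    have hw' : w'.toList.length < n := by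
      simp only [cons_toList, List.length_cons] at hw; omega
    rw [prod_cons, map_mul, Equiv.Perm.mul_apply, ih hw'.le]
    exact Subtype.ext <| (BoundedWord.smul_val_of_fstIdx_ne g hfst hw').trans
      (cons_eq_smul (h1 := hfst) (h2 := hg)).symm

end BoundedWord

theorem residuallyFinite_of_finite [Finite ι] [∀ i, Finite (G i)] :
    Group.ResiduallyFinite (CoprodI G) := by
  classical
  refine Group.residuallyFinite_of_forall_exists_finite_monoidHom fun g hg => ?_
  let w := Word.equiv g
  refine ⟨_, _, inferInstance, boundedWordRep w.toList.length, fun h => hg ?_⟩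
  have hprod : w.prod = g := Word.equiv.symm_apply_apply g
  have hw : Word.empty = w := by
    simpa [hprod, h, BoundedWord.empty] using
      congrArg Subtype.val (boundedWordRep_prod_apply_empty w le_rfl)
  rw [← hprod, ← hw, prod_empty]

instance [Finite ι] [∀ i, Group.ResiduallyFinite (G i)] :
    Group.ResiduallyFinite (CoprodI G) := by
  classical
  refine Group.residuallyFinite_of_forall_exists_monoidHom fun g hg => ?_
  let w := Word.equiv g
  have hletters (i : ι) : ∃ K : FiniteIndexNormalSubgroup (G i),
      ∀ a ∈ {a : G i | ⟨i, a⟩ ∈ w.toList}, a ∉ K :=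
    Group.exists_finiteIndexNormalSubgroup_forall_notMem
      (w.toList.finite_toSet.preimage sigma_mk_injective.injOn) fun h => w.ne_one _ h rfl
  choose K hK using hletters
  refine ⟨_, _, residuallyFinite_of_finite,
    lift fun i => (of (M := fun i => G i ⧸ (K i).toSubgroup)).comp (QuotientGroup.mk' _), ?_⟩
  have hw : w ≠ Word.empty := fun h => hg <| by
    rw [← Word.equiv.symm_apply_apply g]
    exact (congrArg Word.prod h).trans Word.prod_empty
  rw [← Word.equiv.symm_apply_apply g]
  refine lift_of_comp_prod_ne_one _ hw fun ⟨i, a⟩ hl => ?_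
  rw [Ne, QuotientGroup.mk'_apply, QuotientGroup.eq_one_iff]
  exact hK i a hl

instance [Finite ι] [∀ i, Group.FG (G i)] : Group.FG (CoprodI G) := by
  rw [Group.fg_def, ← MonoidHom.range_eq_top_of_surjective (MonoidHom.id _) surjective_id,
    ← lift_of', range_eq_iSup]
  exact .iSup _ fun i => (Group.fg_iff_subgroup_fg _).mp inferInstance

end Group

end Monoid.CoprodI

instance FreeGroup.instResiduallyFinite {α : Type*} [Finite α] :
    Group.ResiduallyFinite (FreeGroup α) :=
  have : Group.ResiduallyFinite (FreeGroup Unit) :=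
    .of_injective FreeGroup.mulEquivIntOfUnique.toMonoidHom
      FreeGroup.mulEquivIntOfUnique.injective
  .of_injective freeGroupEquivCoprodI.toMonoidHom freeGroupEquivCoprodI.injective

namespace Monoid.Coprod

open CoprodI

universe u

variable {G H : Type u} [Group G] [Group H]

instance instGroupCond : ∀ b : Bool, Group (cond b G H)
  | true => ‹Group G›
  | false => ‹Group H›

def mulEquivCoprodI : G ∗ H ≃* CoprodI fun b : Bool => cond b G H :=
  MonoidHom.toMulEquiv
    (lift (of (M := fun b : Bool => cond b G H) (i := true))
      (of (M := fun b : Bool => cond b G H) (i := false)))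
    (CoprodI.lift fun b => Bool.rec (motive := fun b => cond b G H →* G ∗ H) inr inl b)
    (hom_ext (MonoidHom.ext fun _ => by simp) (MonoidHom.ext fun _ => by simp))
    (CoprodI.ext_hom _ _ fun b => by cases b <;> exact MonoidHom.ext fun _ => by simp)

instance [Group.ResiduallyFinite G] [Group.ResiduallyFinite H] :
    Group.ResiduallyFinite (G ∗ H) :=
  have : ∀ b, Group.ResiduallyFinite (cond b G H) := fun b => by cases b <;> assumption
  .of_injective mulEquivCoprodI.toMonoidHom mulEquivCoprodI.injective

instance [Group.FG G] [Group.FG H] : Group.FG (G ∗ H) :=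
  have : ∀ b, Group.FG (cond b G H) := fun b => by cases b <;> assumption
  Group.fg_of_surjective (f := mulEquivCoprodI.symm.toMonoidHom) mulEquivCoprodI.symm.surjective

end Monoid.Coprod

/-- Every finitely generated free product of cyclic groups
`G = 𝔽_r * ℤ_{m₁} * ⋯ * ℤ_{m_s}` is Hopfian: every surjective endomorphism of `G`
is an isomorphism. -/
theorem stmt_4 (r s : ℕ) (m : Fin s → ℕ) (hm : ∀ i, 2 ≤ m i)
    (φ : Monoid.Coprod (FreeGroup (Fin r))
          (Monoid.CoprodI fun i : Fin s => Multiplicative (ZMod (m i))) →*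
        Monoid.Coprod (FreeGroup (Fin r))
          (Monoid.CoprodI fun i : Fin s => Multiplicative (ZMod (m i))))
    (hφ : Function.Surjective φ) :
    Function.Bijective φ := by
  have (i : Fin s) : NeZero (m i) := ⟨by have := hm i; omega⟩
  exact ⟨MonoidHom.injective_of_surjective_of_residuallyFinite
    (G := Monoid.Coprod (FreeGroup (Fin r)) (Monoid.CoprodI fun i => Multiplicative (ZMod (m i))))
    hφ, hφ⟩
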